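/- Let σ ≥ 1/2 and define Φ_σ(x) := x^{2σ} · J_{σ+1}(x)/J_σ(x) for x ∈ (0, j_{σ,1}). Then Φ_σ is positive on (0, j_{σ,1}), strictly increasing on (0, j_{σ,1}), and for every x ∈ (0, j_{σ,1}) it is differentiable with Φ_σ'(x) = x^{2σ} − x^{−1} Φ_σ(x) + x^{−2σ} Φ_σ(x)². -/

import Mathlib

/-!
Write `J_σ x = (x / 2) ^ σ * g_σ ((x / 2) ^ 2)` with `g_σ` entire. Termwise, `g_σ' = -g_{σ+1}` and
`g_σ t = (σ + 1) g_{σ+1} t - t g_{σ+2} t`, so `ρ = J_{σ+1} / J_σ` satisfies the Riccati equation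
`ρ' = 1 - (2σ + 1) ρ / x + ρ²`, and `Φ = x ^ (2σ) ρ` has `Φ' = x ^ (2σ) (1 - ρ / x + ρ²)`.
`J_{σ+1} > 0` on `(0, j_{σ,1})` because `(x ^ (σ+1) J_{σ+1})' = x ^ (σ+1) J_σ`.
For `x > 1/2` the quadratic `1 - ρ / x + ρ²` is positive at every `ρ > 0`; for `x ≤ 1/2` a crude
estimate of the series near `0` gives `ρ < x`, using `σ ≥ 1/2`.
-/

open Set

noncomputable section

/-- The Bessel function of the first kind of order `σ`, defined by its power series
(for positive arguments, using real powers). -/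
def besselJ (σ : ℝ) (x : ℝ) : ℝ :=
  ∑' m : ℕ, ((-1 : ℝ) ^ m / ((m.factorial : ℝ) * Real.Gamma ((m : ℝ) + σ + 1))) *
    (x / 2) ^ (2 * (m : ℝ) + σ)

/-- The first positive zero `j_{σ,1}` of the Bessel function `J_σ`. -/
def besselJZero (σ : ℝ) : ℝ :=
  sInf {x : ℝ | 0 < x ∧ besselJ σ x = 0}

open Nat

lemma Real.Gamma_add_one_le_Gamma_natCast_add_add_one {σ : ℝ} (hσ : 0 ≤ σ) (m : ℕ) :
    Real.Gamma (σ + 1) ≤ Real.Gamma (m + σ + 1) := by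
  induction m with
  | zero => simp
  | succ n ih =>
    have hpos : 0 < (n : ℝ) + σ + 1 := by positivity
    have hstep : Real.Gamma ((n + 1 : ℕ) + σ + 1) = (n + σ + 1) * Real.Gamma (n + σ + 1) := by
      rw [← Real.Gamma_add_one hpos.ne']; push_cast; ring_nf
    rw [hstep]
    nlinarith [Real.Gamma_pos_of_pos hpos, (n.cast_nonneg : (0 : ℝ) ≤ n)]

def besselCoeff (σ : ℝ) (m : ℕ) : ℝ :=
  (-1) ^ m / (m ! * Real.Gamma (m + σ + 1))

/-- The entire function `g_σ` with `J_σ x = (x / 2) ^ σ * g_σ ((x / 2) ^ 2)` for `x > 0`. -/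
def besselSeries (σ t : ℝ) : ℝ :=
  ∑' m, besselCoeff σ m * t ^ m

section

variable {σ : ℝ}

lemma abs_besselCoeff_le (hσ : 0 ≤ σ) (m : ℕ) :
    |besselCoeff σ m| ≤ 1 / (m ! * Real.Gamma (σ + 1)) := by
  rw [besselCoeff, abs_div, abs_pow, abs_neg, abs_one, one_pow, abs_of_pos (by positivity)]
  gcongr
  exact Real.Gamma_add_one_le_Gamma_natCast_add_add_one hσ m

lemma besselCoeff_succ_mul (m : ℕ) :
    besselCoeff σ (m + 1) * (m + 1) = -besselCoeff (σ + 1) m := by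
  simp only [besselCoeff, factorial_succ, pow_succ]
  push_cast
  rw [show (m : ℝ) + 1 + σ + 1 = m + (σ + 1) + 1 by ring]
  field_simp

lemma hasSum_exp_div_Gamma (σ t : ℝ) :
    HasSum (fun m : ℕ => 1 / (m ! * Real.Gamma (σ + 1)) * t ^ m)
      (Real.exp t / Real.Gamma (σ + 1)) := by
  rw [Real.exp_eq_exp_ℝ]
  refine ((NormedSpace.expSeries_div_hasSum_exp t).div_const _).congr_fun fun m => ?_
  field_simp

lemma summable_abs_besselCoeff_mul_pow (hσ : 0 ≤ σ) (t : ℝ) :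
    Summable fun m => |besselCoeff σ m| * |t| ^ m :=
  (hasSum_exp_div_Gamma σ |t|).summable.of_nonneg_of_le (fun _ => by positivity)
    fun m => by gcongr; exact abs_besselCoeff_le hσ m

lemma summable_besselCoeff_mul_pow (hσ : 0 ≤ σ) (t : ℝ) :
    Summable fun m => besselCoeff σ m * t ^ m :=
  .of_norm <| by simpa [abs_mul, abs_pow] using summable_abs_besselCoeff_mul_pow hσ t

lemma abs_besselSeries_le (hσ : 0 ≤ σ) (t : ℝ) :
    |besselSeries σ t| ≤ Real.exp |t| / Real.Gamma (σ + 1) :=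
  tsum_of_norm_bounded (f := fun m => besselCoeff σ m * t ^ m) (hasSum_exp_div_Gamma σ |t|)
    fun m => by
      rw [Real.norm_eq_abs, abs_mul, abs_pow]
      gcongr
      exact abs_besselCoeff_le hσ m

lemma besselSeries_zero (σ : ℝ) : besselSeries σ 0 = (Real.Gamma (σ + 1))⁻¹ := by
  rw [besselSeries, tsum_eq_single 0 fun m hm => by simp [hm]]
  simp [besselCoeff]

lemma hasDerivAt_besselSeries (hσ : 0 ≤ σ) (t : ℝ) :
    HasDerivAt (besselSeries σ) (-besselSeries (σ + 1) t) t := by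
  set R := |t| + 1
  -- after the index shift, the differentiated series is the series of `g_{σ+1}`
  have hsum : Summable fun m : ℕ => |besselCoeff σ m| * (m * R ^ (m - 1)) := by
    refine (summable_nat_add_iff 1).mp ?_
    refine (summable_abs_besselCoeff_mul_pow (σ := σ + 1) (by linarith) R).congr fun m => ?_
    rw [abs_of_pos (by positivity : 0 < R), ← abs_neg, ← besselCoeff_succ_mul, abs_mul]
    push_cast
    rw [abs_of_pos (by positivity : (0 : ℝ) < m + 1)]
    ring
  have ht : t ∈ Metric.ball 0 R := by simp [R]
  have hderiv : ∑' m : ℕ, besselCoeff σ m * (m * t ^ (m - 1)) = -besselSeries (σ + 1) t := by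
    refine (HasSum.tsum_eq ((hasSum_nat_add_iff' 1).mp ?_))
    simp only [Finset.range_one, Finset.sum_singleton, CharP.cast_eq_zero, zero_mul, mul_zero,
      sub_zero]
    refine (summable_besselCoeff_mul_pow (σ := σ + 1) (by linarith) t).hasSum.neg.congr_fun ?_
    intro m
    push_cast
    rw [← mul_assoc, besselCoeff_succ_mul]
    ring
  have h := hasDerivAt_tsum_of_isPreconnected hsum Metric.isOpen_ball
    (convex_ball (0 : ℝ) R).isPreconnected
    (fun m y _ => (hasDerivAt_pow m y).const_mul (besselCoeff σ m))
    (fun m y hy => ?_) ht (summable_besselCoeff_mul_pow hσ t) ht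
  · rwa [hderiv] at h
  · rw [Real.norm_eq_abs, abs_mul, abs_mul, abs_pow, Nat.abs_cast]
    gcongr
    simpa using (mem_ball_zero_iff.mp hy).le

lemma besselCoeff_zero_eq (hσ : 0 ≤ σ) : besselCoeff σ 0 = (σ + 1) * besselCoeff (σ + 1) 0 := by
  have h : 0 < σ + 1 := by linarith
  simp only [besselCoeff, CharP.cast_eq_zero, zero_add, pow_zero, factorial_zero, cast_one,
    one_mul, Real.Gamma_add_one h.ne']
  field_simp [(Real.Gamma_pos_of_pos h).ne']

lemma besselCoeff_succ_eq (hσ : 0 ≤ σ) (m : ℕ) :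
    besselCoeff σ (m + 1) = (σ + 1) * besselCoeff (σ + 1) (m + 1) - besselCoeff (σ + 2) m := by
  have h : 0 < (m : ℝ) + σ + 2 := by positivity
  simp only [besselCoeff, factorial_succ, pow_succ]
  push_cast
  rw [show (m : ℝ) + 1 + σ + 1 = m + σ + 2 by ring,
    show (m : ℝ) + 1 + (σ + 1) + 1 = m + σ + 2 + 1 by ring,
    show (m : ℝ) + (σ + 2) + 1 = m + σ + 2 + 1 by ring, Real.Gamma_add_one h.ne']
  field_simp [(Real.Gamma_pos_of_pos h).ne']
  ring

/-- The recurrence `J_σ x = 2 (σ + 1) / x * J_{σ+1} x - J_{σ+2} x`. -/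
lemma besselSeries_eq_sub (hσ : 0 ≤ σ) (t : ℝ) :
    besselSeries σ t = (σ + 1) * besselSeries (σ + 1) t - t * besselSeries (σ + 2) t := by
  have h1 := ((summable_besselCoeff_mul_pow (σ := σ + 1) (by linarith) t).hasSum.mul_left (σ + 1))
  have h2 := ((summable_besselCoeff_mul_pow (σ := σ + 2) (by linarith) t).hasSum.mul_left t)
  refine (HasSum.tsum_eq ((hasSum_nat_add_iff' 1).mp ?_))
  have h3 := ((hasSum_nat_add_iff' 1).mpr h1).sub h2
  simp only [Finset.range_one, Finset.sum_singleton, pow_zero, mul_one] at h3 ⊢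
  convert h3 using 1
  · ext m
    rw [besselCoeff_succ_eq hσ, pow_succ]
    ring
  · rw [besselCoeff_zero_eq hσ, besselSeries, besselSeries]
    ring

lemma continuous_besselSeries (hσ : 0 ≤ σ) : Continuous (besselSeries σ) :=
  continuous_iff_continuousAt.mpr fun t => (hasDerivAt_besselSeries hσ t).continuousAt

lemma besselJ_eq_rpow_mul_besselSeries (σ : ℝ) {x : ℝ} (hx : 0 < x) :
    besselJ σ x = (x / 2) ^ σ * besselSeries σ ((x / 2) ^ 2) := by
  rw [besselJ, besselSeries, ← tsum_mul_left]
  refine tsum_congr fun m => ?_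
  rw [show 2 * (m : ℝ) + σ = (2 * m : ℕ) + σ by push_cast; ring,
    Real.rpow_add (by positivity), Real.rpow_natCast, pow_mul, besselCoeff]
  ring

lemma besselJ_ne_zero_of_lt_besselJZero {x : ℝ} (hx : 0 < x) (hxj : x < besselJZero σ) :
    besselJ σ x ≠ 0 :=
  fun h => hxj.not_ge <| csInf_le ⟨0, fun _ hy => hy.1.le⟩
    (show x ∈ {y : ℝ | 0 < y ∧ besselJ σ y = 0} from ⟨hx, h⟩)

lemma besselSeries_pos (hσ : 0 ≤ σ) {s : ℝ} (hs : 0 ≤ s) (hsj : s < (besselJZero σ / 2) ^ 2) :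
    0 < besselSeries σ s := by
  have h0 : 0 < besselSeries σ 0 := by
    rw [besselSeries_zero]; exact inv_pos.mpr (Real.Gamma_pos_of_pos (by linarith))
  by_contra! hneg
  obtain ⟨c, ⟨hc0, hcs⟩, hc⟩ := intermediate_value_Icc' hs
    (continuous_besselSeries hσ).continuousOn (show (0 : ℝ) ∈ Icc _ _ from ⟨hneg, h0.le⟩)
  have hcpos : 0 < c := hc0.lt_of_ne (by rintro rfl; exact h0.ne' hc)
  have hj : 0 ≤ besselJZero σ := Real.sInf_nonneg fun _ hy => hy.1.le
  have hsqrt : √c < besselJZero σ / 2 := by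
    simpa [Real.sqrt_sq (by positivity : 0 ≤ besselJZero σ / 2)] using
      Real.sqrt_lt_sqrt hc0 (hcs.trans_lt hsj)
  have hsqrt0 : 0 < √c := Real.sqrt_pos.mpr hcpos
  refine besselJ_ne_zero_of_lt_besselJZero (x := 2 * √c) (by positivity) (by linarith) ?_
  rw [besselJ_eq_rpow_mul_besselSeries σ (by positivity), mul_div_cancel_left₀ _ two_ne_zero,
    Real.sq_sqrt hc0, hc, mul_zero]

/-- `(x ^ (σ+1) J_{σ+1} x)' = x ^ (σ+1) J_σ x`, in the variable `s = (x / 2) ^ 2`. -/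
lemma hasDerivAt_rpow_mul_besselSeries (hσ : 0 ≤ σ) {s : ℝ} (hs : 0 < s) :
    HasDerivAt (fun s => s ^ (σ + 1) * besselSeries (σ + 1) s) (s ^ σ * besselSeries σ s) s := by
  have h := (Real.hasDerivAt_rpow_const (p := σ + 1) (Or.inl hs.ne')).mul
    (hasDerivAt_besselSeries (σ := σ + 1) (by linarith) s)
  refine h.congr_deriv ?_
  rw [besselSeries_eq_sub hσ, add_sub_cancel_right, show σ + 1 + 1 = σ + 2 by ring,
    Real.rpow_add hs, Real.rpow_one]
  ring

lemma besselSeries_succ_pos (hσ : 0 ≤ σ) {t : ℝ} (ht : 0 < t) (htj : t < (besselJZero σ / 2) ^ 2) :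
    0 < besselSeries (σ + 1) t := by
  obtain ⟨ξ, ⟨hξ0, hξt⟩, hξ⟩ := exists_hasDerivAt_eq_slope
    (fun s => s ^ (σ + 1) * besselSeries (σ + 1) s) (fun s => s ^ σ * besselSeries σ s) ht
    ((Real.continuous_rpow_const (by linarith)).mul
      (continuous_besselSeries (by linarith))).continuousOn
    fun s hs => hasDerivAt_rpow_mul_besselSeries hσ hs.1
  have hpos : 0 < ξ ^ σ * besselSeries σ ξ :=
    mul_pos (by positivity) (besselSeries_pos hσ hξ0.le (by linarith))
  rw [hξ, Real.zero_rpow (by linarith), zero_mul, sub_zero, sub_zero] at hpos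
  exact pos_of_mul_pos_right (div_pos_iff_of_pos_right ht |>.mp hpos) (by positivity)

lemma abs_besselSeries_sub_besselSeries_zero_le (hσ : 0 ≤ σ) {t : ℝ} (ht : 0 ≤ t) :
    |besselSeries σ t - besselSeries σ 0| ≤ Real.exp t / Real.Gamma (σ + 1 + 1) * t := by
  have h := norm_image_sub_le_of_norm_deriv_le_segment' (f := besselSeries σ)
    (C := Real.exp t / Real.Gamma (σ + 1 + 1))
    (fun s _ => (hasDerivAt_besselSeries hσ s).hasDerivWithinAt)
    (fun s hs => ?_) t ⟨ht, le_rfl⟩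
  · simpa using h
  · rw [norm_neg, Real.norm_eq_abs]
    refine (abs_besselSeries_le (by linarith) s).trans ?_
    gcongr
    rw [abs_of_nonneg hs.1]
    exact hs.2.le

/-- Compares `g_σ 0 = (σ + 1) / Γ(σ + 2)` with the bounds `|g_{σ+1} t| ≤ e^t / Γ(σ + 2)` and
`|g_σ t - g_σ 0| ≤ t e^t / Γ(σ + 2)`. The range `t ≤ 1/16` is `x ≤ 1/2` for `t = (x / 2) ^ 2`. -/
lemma besselSeries_succ_lt_two_mul (hσ : 1 / 2 ≤ σ) {t : ℝ} (ht0 : 0 ≤ t) (ht : t ≤ 1 / 16) :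
    besselSeries (σ + 1) t < 2 * besselSeries σ t := by
  have hσ1 : 0 < σ + 1 := by linarith
  have hexp : Real.exp t ≤ 16 / 15 := (Real.exp_bound_div_one_sub_of_interval ht0 (by linarith)).trans
    (by rw [div_le_div_iff₀ (by linarith) (by norm_num)]; linarith)
  have hupper := (le_abs_self _).trans (abs_besselSeries_le hσ1.le t)
  have hlower := neg_le_of_abs_le
    (abs_besselSeries_sub_besselSeries_zero_le (σ := σ) (by linarith) ht0)
  rw [abs_of_nonneg ht0, Real.Gamma_add_one hσ1.ne'] at hupper
  rw [besselSeries_zero, Real.Gamma_add_one hσ1.ne'] at hlower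
  set K := (σ + 1) * Real.Gamma (σ + 1)
  have hK : 0 < K := by positivity
  rw [← div_mul_cancel_left₀ hσ1.ne' (Real.Gamma (σ + 1))] at hlower
  have hkey : Real.exp t / K * (1 + 2 * t) < 2 * ((σ + 1) / K) := by
    rw [div_mul_eq_mul_div, ← mul_div_assoc]
    exact div_lt_div_of_pos_right (by nlinarith) hK
  linarith

def besselRatio (σ x : ℝ) : ℝ :=
  x / 2 * (besselSeries (σ + 1) ((x / 2) ^ 2) / besselSeries σ ((x / 2) ^ 2))

lemma besselJ_succ_div_besselJ {x : ℝ} (hx : 0 < x) :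
    besselJ (σ + 1) x / besselJ σ x = besselRatio σ x := by
  have hx2 : 0 < x / 2 := by positivity
  rw [besselJ_eq_rpow_mul_besselSeries _ hx, besselJ_eq_rpow_mul_besselSeries _ hx, besselRatio,
    Real.rpow_add hx2, Real.rpow_one, mul_assoc, mul_div_mul_left _ _ (by positivity), mul_div_assoc]

lemma hasDerivAt_besselRatio (hσ : 0 ≤ σ) {x : ℝ} (hx : 0 < x)
    (hA : besselSeries σ ((x / 2) ^ 2) ≠ 0) :
    HasDerivAt (besselRatio σ) (1 - (2 * σ + 1) * (besselRatio σ x / x) + besselRatio σ x ^ 2) x := by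
  have hsq : HasDerivAt (fun y : ℝ => (y / 2) ^ 2) (x / 2) x :=
    (((hasDerivAt_id x).div_const 2).pow 2).congr_deriv (by simp only [id]; ring)
  have hB := (hasDerivAt_besselSeries (σ := σ + 1) (by linarith) _).comp x hsq
  have hA' := (hasDerivAt_besselSeries hσ _).comp x hsq
  refine (((hasDerivAt_id x).div_const 2).mul (hB.div hA' hA)).congr_deriv ?_
  have hrec := besselSeries_eq_sub hσ ((x / 2) ^ 2)
  simp only [besselRatio, Function.comp_apply, Pi.div_apply, id, show σ + 1 + 1 = σ + 2 by ring]
  set t := (x / 2) ^ 2 with ht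
  set A := besselSeries σ t
  field_simp
  rw [hrec, ht]
  ring

lemma hasDerivAt_rpow_mul_besselRatio (hσ : 0 ≤ σ) {x : ℝ} (hx : 0 < x)
    (hA : besselSeries σ ((x / 2) ^ 2) ≠ 0) :
    HasDerivAt (fun y => y ^ (2 * σ) * besselRatio σ y)
      (x ^ (2 * σ) * (1 - besselRatio σ x / x + besselRatio σ x ^ 2)) x := by
  refine ((Real.hasDerivAt_rpow_const (Or.inl hx.ne')).mul
    (hasDerivAt_besselRatio hσ hx hA)).congr_deriv ?_
  rw [Real.rpow_sub hx, Real.rpow_one]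
  field_simp
  ring

lemma besselRatio_pos {x : ℝ} (hx : 0 < x) (hA : 0 < besselSeries σ ((x / 2) ^ 2))
    (hB : 0 < besselSeries (σ + 1) ((x / 2) ^ 2)) : 0 < besselRatio σ x := by
  unfold besselRatio; positivity

lemma one_sub_besselRatio_div_add_sq_pos (hσ : 1 / 2 ≤ σ) {x : ℝ} (hx : 0 < x)
    (hA : 0 < besselSeries σ ((x / 2) ^ 2)) (hB : 0 < besselSeries (σ + 1) ((x / 2) ^ 2)) :
    0 < 1 - besselRatio σ x / x + besselRatio σ x ^ 2 := by
  have hρ := besselRatio_pos hx hA hB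
  rcases le_or_gt x (1 / 2) with hx2 | hx2
  · have hlt := besselSeries_succ_lt_two_mul hσ (by positivity)
      (show (x / 2) ^ 2 ≤ 1 / 16 by nlinarith)
    have : besselRatio σ x / x < 1 := by
      have : besselSeries (σ + 1) ((x / 2) ^ 2) / besselSeries σ ((x / 2) ^ 2) < 2 :=
        (div_lt_iff₀ hA).mpr hlt
      rw [besselRatio, div_lt_one hx]
      nlinarith
    nlinarith
  · have : besselRatio σ x / x < 2 * besselRatio σ x := by
      rw [div_lt_iff₀ hx]; nlinarith
    nlinarith [sq_nonneg (besselRatio σ x - 1)]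

end

/-- `Φ_σ(x) = x^{2σ} J_{σ+1}(x)/J_σ(x)` is positive and strictly increasing on
`(0, j_{σ,1})`, with derivative `x^{2σ} - x⁻¹ Φ_σ(x) + x^{-2σ} Φ_σ(x)²`. -/
theorem stmt18 (σ : ℝ) (hσ : 1 / 2 ≤ σ) (Φ : ℝ → ℝ)
    (hΦ : ∀ x, Φ x = x ^ (2 * σ) * (besselJ (σ + 1) x / besselJ σ x)) :
    (∀ x ∈ Ioo 0 (besselJZero σ), 0 < Φ x) ∧
    StrictMonoOn Φ (Ioo 0 (besselJZero σ)) ∧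
    ∀ x ∈ Ioo 0 (besselJZero σ),
      HasDerivAt Φ (x ^ (2 * σ) - x⁻¹ * Φ x + x ^ (-(2 * σ)) * (Φ x) ^ 2) x := by
  have hσ0 : 0 ≤ σ := by linarith
  have hΦρ : EqOn Φ (fun y => y ^ (2 * σ) * besselRatio σ y) (Ioo 0 (besselJZero σ)) :=
    fun y hy => by rw [hΦ, besselJ_succ_div_besselJ hy.1]
  have hpos : ∀ x ∈ Ioo 0 (besselJZero σ), 0 < besselSeries σ ((x / 2) ^ 2) ∧
      0 < besselSeries (σ + 1) ((x / 2) ^ 2) := fun x hx => by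
    have hxj : (x / 2) ^ 2 < (besselJZero σ / 2) ^ 2 :=
      pow_lt_pow_left₀ (by linarith [hx.2]) (by linarith [hx.1]) two_ne_zero
    exact ⟨besselSeries_pos hσ0 (by positivity) hxj,
      besselSeries_succ_pos hσ0 (by have := hx.1; positivity) hxj⟩
  have hderiv : ∀ x ∈ Ioo 0 (besselJZero σ), HasDerivAt Φ
      (x ^ (2 * σ) * (1 - besselRatio σ x / x + besselRatio σ x ^ 2)) x := fun x hx =>
    (hasDerivAt_rpow_mul_besselRatio hσ0 hx.1 (hpos x hx).1.ne').congr_of_eventuallyEq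
      (hΦρ.eventuallyEq_of_mem (isOpen_Ioo.mem_nhds hx))
  refine ⟨fun x hx => ?_, strictMonoOn_of_hasDerivWithinAt_pos (convex_Ioo _ _)
    (fun x hx => (hderiv x hx).continuousAt.continuousWithinAt)
    (fun x hx => (hderiv x (interior_subset hx)).hasDerivWithinAt) (fun x hx => ?_),
    fun x hx => (hderiv x hx).congr_deriv ?_⟩
  · rw [hΦρ hx]
    exact mul_pos (by have := hx.1; positivity) (besselRatio_pos hx.1 (hpos x hx).1 (hpos x hx).2)
  · rw [interior_Ioo] at hx
    exact mul_pos (by have := hx.1; positivity)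
      (one_sub_besselRatio_div_add_sq_pos hσ hx.1 (hpos x hx).1 (hpos x hx).2)
  · have := hx.1
    rw [hΦρ hx, Real.rpow_neg hx.1.le]
    field_simp
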